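/- Fix K ≥ 1 and a threshold γ ∈ ℝ. The acceptance region of Fisher's equally weighted statistic, namely the set { (z₁, …, z_K) ∈ ℝ^K : −∑_{k=1}^K log p(z_k) < γ }, where p(z) = 2(1 − Φ(|z|)), is a convex subset of ℝ^K. -/

import Mathlib

/-- The standard normal density φ(t) = (1/√(2π))·exp(−t²/2). -/
noncomputable def stdNormalPDF (t : ℝ) : ℝ :=
  (Real.sqrt (2 * Real.pi))⁻¹ * Real.exp (-t ^ 2 / 2)

/-- The standard normal cumulative distribution function Φ(t) = ∫_{−∞}^t φ(s) ds. -/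
noncomputable def stdNormalCDF (t : ℝ) : ℝ :=
  ∫ s in Set.Iic t, stdNormalPDF s

/-- The two-sided p-value function p(z) = 2(1 − Φ(|z|)). -/
noncomputable def pValue (z : ℝ) : ℝ := 2 * (1 - stdNormalCDF |z|)

/-!
Writing `p(z) = 2 S(|z|)` with `S = 1 - Φ`, each summand of Fisher's statistic is
`-log 2 - log S(|z|)`. The function `-log S` is nondecreasing, and it is convex because its
derivative `φ / S` has derivative `φ (φ - t S) / S²`, which is nonnegative by the
Mills-ratio bound `t S(t) ≤ φ(t)`. A convex nondecreasing function of `|z|` is convex in `z`,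
so the statistic is a sum of convex functions of the coordinates and its strict sublevel sets
are convex.
-/

open MeasureTheory Set Real Filter Topology ProbabilityTheory

lemma stdNormalPDF_eq_gaussianPDFReal : stdNormalPDF = gaussianPDFReal 0 1 := by
  ext t
  simp [stdNormalPDF, gaussianPDFReal]

lemma stdNormalPDF_pos (t : ℝ) : 0 < stdNormalPDF t := by
  rw [stdNormalPDF_eq_gaussianPDFReal]
  exact gaussianPDFReal_pos 0 1 t one_ne_zero

lemma integrable_stdNormalPDF : Integrable stdNormalPDF := by
  rw [stdNormalPDF_eq_gaussianPDFReal]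
  exact integrable_gaussianPDFReal 0 1

lemma integral_stdNormalPDF : ∫ t, stdNormalPDF t = 1 := by
  rw [stdNormalPDF_eq_gaussianPDFReal]
  exact integral_gaussianPDFReal_eq_one 0 one_ne_zero

lemma continuous_stdNormalPDF : Continuous stdNormalPDF := by
  unfold stdNormalPDF
  fun_prop

lemma hasDerivAt_stdNormalPDF (t : ℝ) : HasDerivAt stdNormalPDF (-t * stdNormalPDF t) t := by
  have hexponent : HasDerivAt (fun u : ℝ => -u ^ 2 / 2) (-t) t := by
    simpa using (((hasDerivAt_pow 2 t).neg).div_const 2).congr_deriv (by ring)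
  refine (hexponent.exp.const_mul (Real.sqrt (2 * Real.pi))⁻¹).congr_deriv ?_
  rw [stdNormalPDF]
  ring

lemma tendsto_stdNormalPDF_atTop : Tendsto stdNormalPDF atTop (𝓝 0) := by
  have hexponent : Tendsto (fun t : ℝ => -t ^ 2 / 2) atTop atBot :=
    (tendsto_neg_atTop_atBot.comp (tendsto_pow_atTop two_ne_zero)).atBot_div_const two_pos
  have h := (tendsto_exp_atBot.comp hexponent).const_mul (Real.sqrt (2 * Real.pi))⁻¹
  rw [mul_zero] at h
  exact h

lemma one_sub_stdNormalCDF (t : ℝ) : 1 - stdNormalCDF t = ∫ s in Ioi t, stdNormalPDF s := by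
  have h := intervalIntegral.integral_Iic_add_Ioi (μ := volume) (b := t)
    integrable_stdNormalPDF.integrableOn integrable_stdNormalPDF.integrableOn
  rw [integral_stdNormalPDF] at h
  rw [stdNormalCDF, ← h, add_sub_cancel_left]

lemma one_sub_stdNormalCDF_pos (t : ℝ) : 0 < 1 - stdNormalCDF t := by
  rw [one_sub_stdNormalCDF, setIntegral_pos_iff_support_of_nonneg_ae
    (ae_of_all _ fun x => (stdNormalPDF_pos x).le) integrable_stdNormalPDF.integrableOn]
  have hsupport : Function.support stdNormalPDF = univ :=
    Function.support_eq_univ fun x => (stdNormalPDF_pos x).ne'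
  simp [hsupport]

lemma hasDerivAt_stdNormalCDF (t : ℝ) : HasDerivAt stdNormalCDF (stdNormalPDF t) t := by
  have hsplit : (fun u => stdNormalCDF 0 + ∫ s in (0 : ℝ)..u, stdNormalPDF s) = stdNormalCDF := by
    ext u
    unfold stdNormalCDF
    rw [← intervalIntegral.integral_Iic_sub_Iic integrable_stdNormalPDF.integrableOn
      integrable_stdNormalPDF.integrableOn, add_sub_cancel]
  rw [← hsplit]
  refine HasDerivAt.const_add _ ?_
  exact intervalIntegral.integral_hasDerivAt_right integrable_stdNormalPDF.intervalIntegrable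
    continuous_stdNormalPDF.aestronglyMeasurable.stronglyMeasurableAtFilter
    continuous_stdNormalPDF.continuousAt

/-- Mills' inequality: for `t > 0`, `t (1 - Φ t) = ∫_t^∞ t φ ≤ ∫_t^∞ s φ(s) ds = φ t`,
the last integral because `-φ` is an antiderivative of `s φ(s)`. -/
lemma mul_one_sub_stdNormalCDF_le (t : ℝ) : t * (1 - stdNormalCDF t) ≤ stdNormalPDF t := by
  rcases le_or_gt t 0 with ht | ht
  · exact (mul_nonpos_of_nonpos_of_nonneg ht (one_sub_stdNormalCDF_pos t).le).trans
      (stdNormalPDF_pos t).le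
  have hderiv : ∀ x ∈ Ici t, HasDerivAt (fun u => -stdNormalPDF u) (x * stdNormalPDF x) x :=
    fun x _ => (hasDerivAt_stdNormalPDF x).neg.congr_deriv (by ring)
  have hnonneg : ∀ x ∈ Ioi t, 0 ≤ x * stdNormalPDF x :=
    fun x hx => mul_nonneg (ht.trans hx).le (stdNormalPDF_pos x).le
  have htendsto : Tendsto (fun u => -stdNormalPDF u) atTop (𝓝 0) := by
    simpa using tendsto_stdNormalPDF_atTop.neg
  calc t * (1 - stdNormalCDF t) = ∫ s in Ioi t, t * stdNormalPDF s := by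
        rw [one_sub_stdNormalCDF, integral_const_mul]
    _ ≤ ∫ s in Ioi t, s * stdNormalPDF s :=
        setIntegral_mono_on (integrable_stdNormalPDF.integrableOn.const_mul t)
          (integrableOn_Ioi_deriv_of_nonneg' hderiv hnonneg htendsto) measurableSet_Ioi
          fun s hs => mul_le_mul_of_nonneg_right (le_of_lt hs) (stdNormalPDF_pos s).le
    _ = stdNormalPDF t := by
        simpa using integral_Ioi_of_hasDerivAt_of_nonneg' hderiv hnonneg htendsto

lemma hasDerivAt_negLog_one_sub_stdNormalCDF (t : ℝ) :
    HasDerivAt (fun u => -log (1 - stdNormalCDF u))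
      (stdNormalPDF t / (1 - stdNormalCDF t)) t := by
  refine ((((hasDerivAt_stdNormalCDF t).const_sub 1).log
    (one_sub_stdNormalCDF_pos t).ne').neg).congr_deriv ?_
  ring

lemma hasDerivAt_stdNormalPDF_div_one_sub_stdNormalCDF (t : ℝ) :
    HasDerivAt (fun u => stdNormalPDF u / (1 - stdNormalCDF u))
      (stdNormalPDF t * (stdNormalPDF t - t * (1 - stdNormalCDF t))
        / (1 - stdNormalCDF t) ^ 2) t := by
  refine ((hasDerivAt_stdNormalPDF t).div ((hasDerivAt_stdNormalCDF t).const_sub 1)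
    (one_sub_stdNormalCDF_pos t).ne').congr_deriv ?_
  ring

lemma convexOn_negLog_one_sub_stdNormalCDF :
    ConvexOn ℝ univ (fun t => -log (1 - stdNormalCDF t)) :=
  convexOn_of_hasDerivWithinAt2_nonneg convex_univ
    (fun t _ => (hasDerivAt_negLog_one_sub_stdNormalCDF t).continuousAt.continuousWithinAt)
    (fun t _ => (hasDerivAt_negLog_one_sub_stdNormalCDF t).hasDerivWithinAt)
    (fun t _ => (hasDerivAt_stdNormalPDF_div_one_sub_stdNormalCDF t).hasDerivWithinAt)
    fun t _ => div_nonneg (mul_nonneg (stdNormalPDF_pos t).le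
      (sub_nonneg.2 (mul_one_sub_stdNormalCDF_le t))) (sq_nonneg _)

lemma monotone_negLog_one_sub_stdNormalCDF : Monotone (fun t => -log (1 - stdNormalCDF t)) :=
  monotone_of_hasDerivAt_nonneg hasDerivAt_negLog_one_sub_stdNormalCDF
    fun t => div_nonneg (stdNormalPDF_pos t).le (one_sub_stdNormalCDF_pos t).le

lemma ConvexOn.comp_norm {E : Type*} [SeminormedAddCommGroup E] [NormedSpace ℝ E]
    {g : ℝ → ℝ} (hg : ConvexOn ℝ (Ici 0) g) (hg_mono : MonotoneOn g (Ici 0)) :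
    ConvexOn ℝ univ (fun x : E => g ‖x‖) := by
  refine ⟨convex_univ, fun x _ y _ a b ha hb hab => ?_⟩
  calc g ‖a • x + b • y‖ ≤ g (a • ‖x‖ + b • ‖y‖) :=
        hg_mono (norm_nonneg _)
          (add_nonneg (mul_nonneg ha (norm_nonneg x)) (mul_nonneg hb (norm_nonneg y)))
          ((convexOn_norm convex_univ).2 trivial trivial ha hb hab)
    _ ≤ a • g ‖x‖ + b • g ‖y‖ := hg.2 (norm_nonneg x) (norm_nonneg y) ha hb hab

lemma ConvexOn.sum_comp_eval {ι : Type*} [Fintype ι] {f : ℝ → ℝ} (hf : ConvexOn ℝ univ f) :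
    ConvexOn ℝ univ (fun z : ι → ℝ => ∑ k, f (z k)) := by
  have hsum := Finset.sum_induction (fun k (z : ι → ℝ) => f (z k)) (ConvexOn ℝ univ)
    (s := Finset.univ) (fun _ _ => ConvexOn.add) (convexOn_const 0 convex_univ)
    fun k _ => hf.comp_linearMap (LinearMap.proj k : (ι → ℝ) →ₗ[ℝ] ℝ)
  rwa [Finset.sum_fn] at hsum

lemma negLog_pValue (z : ℝ) : -log (pValue z) = -log 2 + -log (1 - stdNormalCDF |z|) := by
  rw [pValue, log_mul two_ne_zero (one_sub_stdNormalCDF_pos _).ne']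
  ring

lemma convexOn_negLog_pValue : ConvexOn ℝ univ (fun z => -log (pValue z)) := by
  simp only [negLog_pValue, ← Real.norm_eq_abs]
  exact (convexOn_const _ convex_univ).add <|
    (convexOn_negLog_one_sub_stdNormalCDF.subset (subset_univ _) (convex_Ici 0)).comp_norm
      (monotone_negLog_one_sub_stdNormalCDF.monotoneOn _)

theorem stmt_4_general (K : ℕ) (γ : ℝ) :
    Convex ℝ {z : Fin K → ℝ | -∑ k, Real.log (pValue (z k)) < γ} := by
  simpa [Finset.sum_neg_distrib] using
    (convexOn_negLog_pValue.sum_comp_eval (ι := Fin K)).convex_lt γ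

/-- For K ≥ 1 and γ ∈ ℝ, the acceptance region of Fisher's equally weighted statistic,
{ z ∈ ℝ^K : −∑_k log p(z_k) < γ }, is a convex subset of ℝ^K. -/
theorem stmt_4 (K : ℕ) (hK : 1 ≤ K) (γ : ℝ) :
    Convex ℝ {z : Fin K → ℝ | -∑ k, Real.log (pValue (z k)) < γ} :=
  stmt_4_general K γ
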